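/- arXiv:math/0311497 — 2 statements merged into one kernel-verified Lean document; each statement's English description precedes it below -/
import Mathlib

section
/- Let p be a prime and let A, B, C be integers with gcd(A,B) = 1 and AB ≠ 0 such that A^4 + B^2 = C^p. Then there exists a prime number ℓ with ℓ > 3 such that ℓ divides C. -/
theorem exists_large_prime_divisor_of_C
    (p : ℕ) (hp : p.Prime) (A B C : ℤ)
    (hcop : Int.gcd A B = 1) (hnt : A * B ≠ 0)
    (heq : A ^ 4 + B ^ 2 = C ^ p) :
    ∃ ℓ : ℕ, ℓ.Prime ∧ 3 < ℓ ∧ (ℓ : ℤ) ∣ C := by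
  have hA : A ≠ 0 := fun h => hnt (by simp [h])
  have hB : B ≠ 0 := fun h => hnt (by simp [h])
  have hp2 : 2 ≤ p := hp.two_le
  have hpr2 : Prime (2 : ℤ) := Int.prime_two
  have hpr3 : Prime (3 : ℤ) := Int.prime_three
  -- C is odd
  have h2 : ¬ (2:ℤ) ∣ C := by
    rintro hc
    have hCp : (2:ℤ) ∣ C ^ p := hc.pow (by omega)
    have hA2 : ¬ (2:ℤ) ∣ A := by
      intro hdA
      have hB2 : (2:ℤ) ∣ B ^ 2 := by
        have : B ^ 2 = C ^ p - A ^ 4 := by linarith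
        rw [this]
        exact dvd_sub hCp (hdA.pow (by omega))
      have hdB : (2:ℤ) ∣ B := hpr2.dvd_of_dvd_pow hB2
      have : (2:ℕ) ∣ Int.gcd A B :=
        Nat.dvd_gcd (Int.natAbs_dvd_natAbs.mpr hdA) (Int.natAbs_dvd_natAbs.mpr hdB)
      omega
    have hB2 : ¬ (2:ℤ) ∣ B := by
      intro hdB
      have hA4 : (2:ℤ) ∣ A ^ 4 := by
        have : A ^ 4 = C ^ p - B ^ 2 := by linarith
        rw [this]
        exact dvd_sub hCp (hdB.pow (by omega))
      exact hA2 (hpr2.dvd_of_dvd_pow hA4)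
    obtain ⟨a, ha⟩ : Odd A := by
      rcases Int.even_or_odd A with h | h
      · exact absurd h.two_dvd hA2
      · exact h
    obtain ⟨b, hb⟩ : Odd B := by
      rcases Int.even_or_odd B with h | h
      · exact absurd h.two_dvd hB2
      · exact h
    obtain ⟨c, hc⟩ := hc
    have key : ((A:ZMod 4))^4 + ((B:ZMod 4))^2 = ((C:ZMod 4))^p := by
      exact_mod_cast congrArg (fun x : ℤ => (x : ZMod 4)) heq
    have hA4 : ((A:ZMod 4))^4 = 1 := by
      have : (A:ZMod 4) = 2*(a:ZMod 4)+1 := by rw [ha]; push_cast; ring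
      rw [this]
      exact (by decide : ∀ x : ZMod 4, (2*x+1)^4 = 1) _
    have hB4 : ((B:ZMod 4))^2 = 1 := by
      have : (B:ZMod 4) = 2*(b:ZMod 4)+1 := by rw [hb]; push_cast; ring
      rw [this]
      exact (by decide : ∀ x : ZMod 4, (2*x+1)^2 = 1) _
    have hC4 : ((C:ZMod 4))^p = 0 := by
      have hCc : (C:ZMod 4) = 2*(c:ZMod 4) := by rw [hc]; push_cast; ring
      rw [hCc, mul_pow]
      have : (2:ZMod 4)^p = 0 := by
        have hpsplit : p = 2 + (p - 2) := by omega
        rw [hpsplit, pow_add, show ((2:ZMod 4)^2) = 0 from by decide, zero_mul]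
      rw [this, zero_mul]
    rw [hA4, hB4, hC4] at key
    exact absurd key (by decide)
  -- C is not divisible by 3
  have h3 : ¬ (3:ℤ) ∣ C := by
    rintro hc
    have key : ((A:ZMod 3))^4 + ((B:ZMod 3))^2 = ((C:ZMod 3))^p := by
      exact_mod_cast congrArg (fun x : ℤ => (x : ZMod 3)) heq
    have hC0 : (C:ZMod 3) = 0 :=
      (ZMod.intCast_zmod_eq_zero_iff_dvd C 3).mpr (by exact_mod_cast hc)
    rw [hC0, zero_pow (by omega)] at key
    have hAB : (A:ZMod 3) = 0 ∧ (B:ZMod 3) = 0 :=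
      (by decide : ∀ x y : ZMod 3, x^4 + y^2 = 0 → x = 0 ∧ y = 0) _ _ key
    have hdA : (3:ℤ) ∣ A := by
      have := (ZMod.intCast_zmod_eq_zero_iff_dvd A 3).mp hAB.1
      exact_mod_cast this
    have hdB : (3:ℤ) ∣ B := by
      have := (ZMod.intCast_zmod_eq_zero_iff_dvd B 3).mp hAB.2
      exact_mod_cast this
    have : (3:ℕ) ∣ Int.gcd A B :=
      Nat.dvd_gcd (Int.natAbs_dvd_natAbs.mpr hdA) (Int.natAbs_dvd_natAbs.mpr hdB)
    omega
  -- |C| > 1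
  have sq1 : ∀ x : ℤ, x ≠ 0 → 1 ≤ x ^ 2 := by
    intro x hx
    rcases lt_or_gt_of_ne hx with h | h <;> nlinarith
  have hA1 : (1:ℤ) ≤ A ^ 4 := by have := sq1 A hA; nlinarith
  have hB1 : (1:ℤ) ≤ B ^ 2 := sq1 B hB
  have hCbig : 1 < C.natAbs := by
    by_contra h
    push_neg at h
    interval_cases h' : C.natAbs
    · have : C = 0 := Int.natAbs_eq_zero.mp h'
      have : C ^ p = 0 := by rw [this]; exact zero_pow (by omega)
      linarith
    · have hC1 : C = 1 ∨ C = -1 := Int.natAbs_eq_iff.mp h' |>.imp id id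
      have habs : (C ^ p).natAbs = 1 := by
        rw [Int.natAbs_pow, h', one_pow]
      have : A ^ 4 + B ^ 2 ≤ 1 := by
        rw [heq]
        rcases Int.natAbs_eq_iff.mp habs with h | h
        · omega
        · omega
      linarith
  refine ⟨C.natAbs.minFac, Nat.minFac_prime (by omega), ?_, ?_⟩
  · have hpr := Nat.minFac_prime (show C.natAbs ≠ 1 by omega)
    have h2' : C.natAbs.minFac ≠ 2 := by
      intro h
      apply h2
      have : (2:ℕ) ∣ C.natAbs := h ▸ Nat.minFac_dvd _
      exact dvd_trans (Int.natCast_dvd_natCast.mpr this) (Int.natAbs_dvd.mpr dvd_rfl)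
    have h3' : C.natAbs.minFac ≠ 3 := by
      intro h
      apply h3
      have : (3:ℕ) ∣ C.natAbs := h ▸ Nat.minFac_dvd _
      exact dvd_trans (Int.natCast_dvd_natCast.mpr this) (Int.natAbs_dvd.mpr dvd_rfl)
    have h4' : C.natAbs.minFac ≠ 4 := by
      intro h
      have := hpr
      rw [h] at this
      exact absurd this (by decide)
    have := hpr.two_le
    by_contra hle
    push_neg at hle
    interval_cases C.natAbs.minFac <;> simp_all
  · exact dvd_trans (Int.natCast_dvd_natCast.mpr (Nat.minFac_dvd _)) (Int.natAbs_dvd.mpr dvd_rfl)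
end

section
/- Let p be a prime and let A, B, C be integers with gcd(A,B) = 1 and C ≠ 0 such that A^4 + B^2 = C^p. Let q be a prime element of the Gaussian integers ℤ[i] which does not divide 2. Then p divides the multiplicity of q in (A² + iB)·(A² − iB)² (the multiplicity is finite since this Gaussian integer is nonzero). -/
/-!
Since `A` and `B` are coprime and `q` is odd, `q` divides at most one of the factors
`A² ± iB` of `C ^ p`, so its multiplicity in that factor is `p` times its multiplicity
in `C`, and it does not divide the other factor at all.
-/

section Multiplicity

variable {α : Type*} [CommMonoidWithZero α] [IsCancelMulZero α] [WfDvdMonoid α] {q u v c : α} {n : ℕ}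

theorem dvd_multiplicity_of_mul_eq_pow_of_not_dvd (hq : Prime q) (hc : c ≠ 0)
    (huv : u * v = c ^ n) (hv : ¬q ∣ v) : n ∣ multiplicity q u := by
  have hmul := multiplicity_mul hq (.of_prime_left hq (huv ▸ pow_ne_zero n hc))
  rw [multiplicity_eq_zero.mpr hv, add_zero, huv,
    (FiniteMultiplicity.of_prime_left hq hc).multiplicity_pow hq] at hmul
  exact ⟨_, hmul.symm⟩

theorem dvd_multiplicity_mul_pow_of_mul_eq_pow (hq : Prime q) (hc : c ≠ 0)
    (huv : u * v = c ^ n) (hcop : ¬(q ∣ u ∧ q ∣ v)) (k : ℕ) :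
    n ∣ multiplicity q (u * v ^ k) := by
  have huv0 : u * v ≠ 0 := huv ▸ pow_ne_zero n hc
  have hu0 : u ≠ 0 := left_ne_zero_of_mul huv0
  have hv0 : v ≠ 0 := right_ne_zero_of_mul huv0
  rw [multiplicity_mul hq (.of_prime_left hq (mul_ne_zero hu0 (pow_ne_zero k hv0))),
    (FiniteMultiplicity.of_prime_left hq hv0).multiplicity_pow hq]
  rcases not_and_or.mp hcop with hu | hv
  · rw [multiplicity_eq_zero.mpr hu, zero_add]
    exact (dvd_multiplicity_of_mul_eq_pow_of_not_dvd hq hc (mul_comm u v ▸ huv) hu).mul_left k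
  · rw [multiplicity_eq_zero.mpr hv, mul_zero, add_zero]
    exact dvd_multiplicity_of_mul_eq_pow_of_not_dvd hq hc huv hv

end Multiplicity

theorem Prime.not_dvd_add_and_dvd_sub {R : Type*} [CommRing R] {q x y : R} (hq : Prime q)
    (hq2 : ¬q ∣ 2) (hxy : IsCoprime x y) : ¬(q ∣ x + y ∧ q ∣ x - y) := by
  rintro ⟨hadd, hsub⟩
  have hx : q ∣ x := by
    have h2x : q ∣ 2 * x := by simpa only [add_add_sub_cancel, two_mul] using dvd_add hadd hsub
    exact (hq.dvd_or_dvd h2x).resolve_left hq2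
  have hy : q ∣ y := by
    have h2y : q ∣ 2 * y := by simpa only [add_sub_sub_cancel, two_mul] using dvd_sub hadd hsub
    exact (hq.dvd_or_dvd h2y).resolve_left hq2
  exact hq.not_isUnit (hxy.isUnit_of_dvd' hx hy)

namespace GaussianInt

theorem add_I_mul_mul_sub_I_mul (x y : GaussianInt) :
    (x + ⟨0, 1⟩ * y) * (x - ⟨0, 1⟩ * y) = x ^ 2 + y ^ 2 := by
  have hI : (⟨0, 1⟩ * ⟨0, 1⟩ : GaussianInt) = -1 := by decide
  linear_combination (-y ^ 2) * hI

theorem isCoprime_intCast_sq_I_mul {A B : ℤ} (hAB : IsCoprime A B) :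
    IsCoprime ((A : GaussianInt) ^ 2) (⟨0, 1⟩ * B) := by
  have hI : IsUnit (⟨0, 1⟩ : GaussianInt) := IsUnit.of_mul_eq_one ⟨0, -1⟩ (by decide)
  rw [isCoprime_mul_unit_left_right hI]
  simpa only [map_pow, eq_intCast] using (hAB.pow_left (m := 2)).map (Int.castRingHom GaussianInt)

end GaussianInt

theorem p_dvd_multiplicity_of_odd_gaussian_prime_general
    (p : ℕ) (A B C : ℤ)
    (hcop : Int.gcd A B = 1) (hC : C ≠ 0)
    (heq : A ^ 4 + B ^ 2 = C ^ p)
    (q : GaussianInt) (hq : Prime q) (hq2 : ¬ q ∣ 2) :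
    p ∣ multiplicity q
      (((A : GaussianInt) ^ 2 + ⟨0, 1⟩ * B) *
        ((A : GaussianInt) ^ 2 - ⟨0, 1⟩ * B) ^ 2) := by
  have hprod : ((A : GaussianInt) ^ 2 + ⟨0, 1⟩ * B) * ((A : GaussianInt) ^ 2 - ⟨0, 1⟩ * B) =
      (C : GaussianInt) ^ p := by
    rw [GaussianInt.add_I_mul_mul_sub_I_mul, ← pow_mul]
    exact_mod_cast heq
  have hcoprime := GaussianInt.isCoprime_intCast_sq_I_mul (Int.isCoprime_iff_gcd_eq_one.mpr hcop)
  exact dvd_multiplicity_mul_pow_of_mul_eq_pow hq (Int.cast_ne_zero.mpr hC) hprod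
    (hq.not_dvd_add_and_dvd_sub hq2 hcoprime) 2

theorem p_dvd_multiplicity_of_odd_gaussian_prime
    (p : ℕ) (hp : p.Prime) (A B C : ℤ)
    (hcop : Int.gcd A B = 1) (hC : C ≠ 0)
    (heq : A ^ 4 + B ^ 2 = C ^ p)
    (q : GaussianInt) (hq : Prime q) (hq2 : ¬ q ∣ 2) :
    p ∣ multiplicity q
      (((A : GaussianInt) ^ 2 + ⟨0, 1⟩ * B) *
        ((A : GaussianInt) ^ 2 - ⟨0, 1⟩ * B) ^ 2) :=
  p_dvd_multiplicity_of_odd_gaussian_prime_general p A B C hcop hC heq q hq hq2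
end
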